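/- arXiv:math/0406617 — 4 statements merged into one kernel-verified Lean document; each statement's English description precedes it below -/
import Mathlib

section
/- For n ≥ 2, m ≥ 1, ℓ ≥ 0, the map (λ,μ) ↦ λ/μ^ sending a pair of ℓ-dominant weights to its periodic skew diagram is a surjection from J_{m,ℓ} onto D^n_{(m,-ℓ)}, and its restriction to J*_{m,ℓ} (pairs with λ_i > μ_i for all i) is a bijection onto D^{*n}_{(m,-ℓ)}. -/
/-- `Λ ⊆ ℤ²` is a `γ`-periodic skew diagram of degree `n`:
(D1) `Λ + γ = Λ`; (D2) a fundamental domain of the `ℤγ`-action on `Λ` has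
exactly `n` elements; (D3) rectangle closure. -/
def IsPSD (n : ℕ) (γ : ℤ × ℤ) (Λ : Set (ℤ × ℤ)) : Prop :=
  ((fun u => u + γ) '' Λ = Λ) ∧
  (∃ D : Finset (ℤ × ℤ), ↑D ⊆ Λ ∧ D.card = n ∧
    ∀ u ∈ Λ, ∃! v, v ∈ D ∧ ∃ k : ℤ, u = v + k • γ) ∧
  (∀ a b i j : ℤ, 0 ≤ i → 0 ≤ j → (a, b) ∈ Λ → (a + i, b + j) ∈ Λ →
    ∀ i' j' : ℤ, 0 ≤ i' → i' ≤ i → 0 ≤ j' → j' ≤ j → (a + i', b + j') ∈ Λ)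

/-- The periodic skew diagram `λ/μ^` attached to `(λ,μ)` (rows are indexed
`1,…,m`, with the `0`-indexed data `lam i = λ_{i+1}`, `mu i = μ_{i+1}`):
`λ/μ^ = ⋃_{k∈ℤ} (λ/μ + k(m,-ℓ))`. -/
def hatD (m ℓ : ℕ) (lam mu : ℕ → ℤ) : Set (ℤ × ℤ) :=
  {p | ∃ (k : ℤ) (i : ℕ), i < m ∧ p.1 = (i : ℤ) + 1 + k * m ∧
        mu i + 1 ≤ p.2 + k * ℓ ∧ p.2 + k * ℓ ≤ lam i}

/-- `v ∈ P̂⁺_{m,ℓ}`: weakly decreasing with spread at most `ℓ`. -/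
def isDom (m ℓ : ℕ) (v : ℕ → ℤ) : Prop :=
  (∀ i j : ℕ, i ≤ j → j < m → v j ≤ v i) ∧ v 0 - v (m - 1) ≤ (ℓ : ℤ)

/-- `(λ,μ) ∈ 𝒥_{m,ℓ}`. -/
def memJ (n m ℓ : ℕ) (lam mu : ℕ → ℤ) : Prop :=
  1 ≤ m ∧ isDom m ℓ lam ∧ isDom m ℓ mu ∧ (∀ i < m, mu i ≤ lam i) ∧
    (∑ i ∈ Finset.range m, (lam i - mu i)) = (n : ℤ)

/-- `(λ,μ) ∈ 𝒥*_{m,ℓ}` (no empty rows: `λ_i > μ_i`). -/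
def memJstar (n m ℓ : ℕ) (lam mu : ℕ → ℤ) : Prop :=
  1 ≤ m ∧ isDom m ℓ lam ∧ isDom m ℓ mu ∧ (∀ i < m, mu i < lam i) ∧
    (∑ i ∈ Finset.range m, (lam i - mu i)) = (n : ℤ)

/-- A tableau on the (`(m,-ℓ)`-periodic) diagram `Λ`: a bijection `Λ → ℤ`
with `T(u + (m,-ℓ)) = T(u) + n`. -/
def IsTab (n m ℓ : ℕ) (Λ : Set (ℤ × ℤ)) (T : ℤ × ℤ → ℤ) : Prop :=
  Set.BijOn T Λ Set.univ ∧ ∀ u ∈ Λ, T (u + ((m : ℤ), -(ℓ : ℤ))) = T u + (n : ℤ)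

/-- Row increasing. -/
def RowInc (Λ : Set (ℤ × ℤ)) (T : ℤ × ℤ → ℤ) : Prop :=
  ∀ a b : ℤ, (a, b) ∈ Λ → (a, b + 1) ∈ Λ → T (a, b) < T (a, b + 1)

/-- Column increasing. -/
def ColInc (Λ : Set (ℤ × ℤ)) (T : ℤ × ℤ → ℤ) : Prop :=
  ∀ a b : ℤ, (a, b) ∈ Λ → (a + 1, b) ∈ Λ → T (a, b) < T (a + 1, b)

/-- A standard (row-column increasing) tableau. -/
def IsStdTab (n m ℓ : ℕ) (Λ : Set (ℤ × ℤ)) (T : ℤ × ℤ → ℤ) : Prop :=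
  IsTab n m ℓ Λ T ∧ RowInc Λ T ∧ ColInc Λ T

/-- `F` is the content function of the tableau `T`: `F(T(a,b)) = b - a`. -/
def IsContent (Λ : Set (ℤ × ℤ)) (T : ℤ × ℤ → ℤ) (F : ℤ → ℤ) : Prop :=
  ∀ u ∈ Λ, F (T u) = u.2 - u.1

namespace PSDaux

def idx (m : ℕ) (x : ℤ) : ℕ := ((x - 1) % m).toNat

def kk (m : ℕ) (x : ℤ) : ℤ := (x - 1) / m

lemma idx_lt {m : ℕ} (hm : 1 ≤ m) (x : ℤ) : idx m x < m := by
  have h1 : (x - 1) % m < m := Int.emod_lt_of_pos _ (by exact_mod_cast hm)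
  have h2 : 0 ≤ (x - 1) % m := Int.emod_nonneg _ (by positivity)
  unfold idx; omega

lemma decomp {m : ℕ} (hm : 1 ≤ m) (x : ℤ) :
    x = (idx m x : ℤ) + 1 + kk m x * m := by
  have h2 : 0 ≤ (x - 1) % m := Int.emod_nonneg _ (by positivity)
  have h := Int.mul_ediv_add_emod (x - 1) m
  unfold idx kk
  rw [Int.toNat_of_nonneg h2]
  linarith [mul_comm ((x-1) / (m:ℤ)) (m:ℤ)]

lemma uniq {m : ℕ} (hm : 1 ≤ m) {x : ℤ} {i : ℕ} {k : ℤ} (hi : i < m)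
    (hx : x = (i : ℤ) + 1 + k * m) : i = idx m x ∧ k = kk m x := by
  have hx1 : x - 1 = (i : ℤ) + (m : ℤ) * k := by linarith [mul_comm k (m:ℤ)]
  have hilt : (i : ℤ) < (m : ℤ) := by exact_mod_cast hi
  have he : (x - 1) % m = (i : ℤ) := by
    rw [hx1, Int.add_mul_emod_self_left]
    exact Int.emod_eq_of_lt (by positivity) hilt
  have hd : (x - 1) / m = k := by
    rw [hx1, Int.add_mul_ediv_left _ _ (by positivity : (m:ℤ) ≠ 0),
      Int.ediv_eq_zero_of_lt (by positivity) hilt]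
    ring
  constructor
  · unfold idx; omega
  · unfold kk; omega

def LL (m ℓ : ℕ) (v : ℕ → ℤ) (x : ℤ) : ℤ := v (idx m x) - kk m x * ℓ

lemma mem_hatD {m ℓ : ℕ} (hm : 1 ≤ m) {lam mu : ℕ → ℤ} (p : ℤ × ℤ) :
    p ∈ hatD m ℓ lam mu ↔ LL m ℓ mu p.1 + 1 ≤ p.2 ∧ p.2 ≤ LL m ℓ lam p.1 := by
  constructor
  · rintro ⟨k, i, hi, h1, h2, h3⟩
    obtain ⟨hie, hke⟩ := uniq hm hi h1
    unfold LL; rw [← hie, ← hke]; constructor <;> nlinarith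
  · rintro ⟨h1, h2⟩
    exact ⟨kk m p.1, idx m p.1, idx_lt hm p.1, decomp hm p.1, by unfold LL at *; omega,
      by unfold LL at *; omega⟩

lemma idx_shift {m : ℕ} (hm : 1 ≤ m) (x : ℤ) :
    idx m (x + m) = idx m x ∧ kk m (x + m) = kk m x + 1 := by
  have h := decomp hm x
  have := uniq hm (x := x + m) (k := kk m x + 1) (idx_lt hm x)
    (by push_cast at h ⊢; linarith)
  exact ⟨(this.1).symm, (this.2).symm⟩

lemma LL_shift {m ℓ : ℕ} (hm : 1 ≤ m) (v : ℕ → ℤ) (x : ℤ) :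
    LL m ℓ v (x + m) = LL m ℓ v x - ℓ := by
  obtain ⟨h1, h2⟩ := idx_shift hm x
  unfold LL; rw [h1, h2]; ring

lemma LL_base {m ℓ : ℕ} (hm : 1 ≤ m) (v : ℕ → ℤ) {i : ℕ} (hi : i < m) :
    LL m ℓ v ((i : ℤ) + 1) = v i := by
  obtain ⟨h1, h2⟩ := uniq hm (x := (i : ℤ) + 1) (k := 0) hi (by ring)
  unfold LL; rw [← h1, ← h2]; ring

lemma LL_antitone {m ℓ : ℕ} (hm : 1 ≤ m) {v : ℕ → ℤ} (hv : isDom m ℓ v) :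
    Antitone (LL m ℓ v) := by
  apply antitone_int_of_succ_le
  intro x
  have hd := decomp hm x
  have hi := idx_lt hm x
  rcases Nat.lt_or_ge (idx m x + 1) m with h | h
  · obtain ⟨h1, h2⟩ := uniq hm (x := x + 1) (k := kk m x) h
      (by push_cast at hd ⊢; linarith)
    unfold LL; rw [← h1, ← h2]
    have := hv.1 (idx m x) (idx m x + 1) (by omega) h
    omega
  · have him : idx m x = m - 1 := by omega
    have hc : ((idx m x : ℕ) : ℤ) = (m : ℤ) - 1 := by
      rw [him]; push_cast [Nat.cast_sub hm]; ring
    obtain ⟨h1, h2⟩ := uniq hm (x := x + 1) (i := 0) (k := kk m x + 1)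
      (show 0 < m from hm) (by push_cast; linarith)
    unfold LL; rw [← h1, ← h2, him]
    have := hv.2
    have hl : (0:ℤ) ≤ ℓ := Int.ofNat_nonneg ℓ
    have hexp : (kk m x + 1) * (ℓ:ℤ) = kk m x * ℓ + ℓ := by ring
    omega

theorem part1 {n m ℓ : ℕ} {lam mu : ℕ → ℤ} (hm : 1 ≤ m)
    (hlam : isDom m ℓ lam) (hmu : isDom m ℓ mu) (hml : ∀ i < m, mu i ≤ lam i)
    (hsum : (∑ i ∈ Finset.range m, (lam i - mu i)) = (n : ℤ)) :
    IsPSD n ((m : ℤ), -(ℓ : ℤ)) (hatD m ℓ lam mu) := by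
  have hLs := fun x => LL_shift (ℓ := ℓ) hm lam x
  have hMs := fun x => LL_shift (ℓ := ℓ) hm mu x
  refine ⟨?_, ?_, ?_⟩
  · ext ⟨x, y⟩
    simp only [Set.mem_image, Prod.exists]
    constructor
    · rintro ⟨a, b, hab, heq⟩
      rw [mem_hatD hm] at hab ⊢
      have h1 : a = x - m := by have := congrArg Prod.fst heq; simp at this; omega
      have h2 : b = y + ℓ := by have := congrArg Prod.snd heq; simp at this; omega
      subst h1 h2
      have e1 := hMs (x - m); have e2 := hLs (x - m)
      simp only [sub_add_cancel] at e1 e2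
      simp only [] at hab ⊢
      omega
    · intro hxy
      refine ⟨x - m, y + ℓ, ?_, by simp⟩
      rw [mem_hatD hm] at hxy ⊢
      have e1 := hMs (x - m); have e2 := hLs (x - m)
      simp only [sub_add_cancel] at e1 e2
      simp only [] at hxy ⊢
      omega
  · classical
    refine ⟨(Finset.range m).biUnion
      (fun i => (Finset.Icc (mu i + 1) (lam i)).image (fun b => (((i : ℤ) + 1), b))), ?_, ?_, ?_⟩
    · intro u hu
      simp only [Finset.coe_biUnion, Finset.mem_coe, Finset.mem_biUnion, Finset.mem_image,
        Finset.mem_range, Finset.mem_Icc, Set.mem_iUnion] at hu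
      obtain ⟨i, hi, b, ⟨hb1, hb2⟩, rfl⟩ := hu
      exact ⟨0, i, hi, by simp, by simpa using hb1, by simpa using hb2⟩
    · rw [Finset.card_biUnion]
      · have : ∀ i ∈ Finset.range m,
            ((Finset.Icc (mu i + 1) (lam i)).image (fun b => (((i : ℤ) + 1), b))).card
              = (lam i - mu i).toNat := by
          intro i hi
          rw [Finset.card_image_of_injective _ (fun a b h => by simpa using h)]
          rw [Int.card_Icc]
          congr 1; omega
        rw [Finset.sum_congr rfl this]
        have hc : ((∑ i ∈ Finset.range m, (lam i - mu i).toNat : ℕ) : ℤ) = (n : ℤ) := by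
          push_cast
          rw [← hsum]
          apply Finset.sum_congr rfl
          intro i hi
          rw [Finset.mem_range] at hi
          exact Int.toNat_of_nonneg (by linarith [hml i hi])
        exact_mod_cast hc
      · intro i hi j hj hij
        simp only [Finset.disjoint_left, Finset.mem_image]
        rintro p ⟨b, _, rfl⟩ ⟨b', _, hE⟩
        have : (i : ℤ) = (j : ℤ) := by
          have := congrArg Prod.fst hE; simp at this; omega
        exact hij (by exact_mod_cast this)
    · rintro ⟨x, y⟩ hu
      rw [mem_hatD hm] at hu
      simp only [] at hu
      refine ⟨((idx m x : ℤ) + 1, y + kk m x * ℓ), ⟨?_, kk m x, ?_⟩, ?_⟩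
      · simp only [Finset.mem_biUnion, Finset.mem_range, Finset.mem_image, Finset.mem_Icc]
        refine ⟨idx m x, idx_lt hm x, y + kk m x * ℓ, ⟨?_, ?_⟩, rfl⟩
        · unfold LL at hu; omega
        · unfold LL at hu; omega
      · have hd := decomp hm x
        simp only [Prod.mk.injEq, Prod.mk_add_mk, Prod.smul_mk, smul_eq_mul]
        constructor
        · linarith
        · ring
      · rintro ⟨a, b⟩ ⟨hv, k, hk⟩
        simp only [Finset.mem_biUnion, Finset.mem_range, Finset.mem_image, Finset.mem_Icc] at hv
        obtain ⟨i, hi, b', hb', hE⟩ := hv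
        have ha : a = (i:ℤ)+1 := (congrArg Prod.fst hE).symm
        have hb : b = b' := (congrArg Prod.snd hE).symm
        subst ha hb
        simp only [Prod.mk.injEq, Prod.mk_add_mk, Prod.smul_mk, smul_eq_mul] at hk
        obtain ⟨hk1, hk2⟩ := hk
        obtain ⟨hie, hke⟩ := uniq hm (x := x) (k := k) hi (by linarith)
        simp only [Prod.mk.injEq]
        constructor
        · rw [← hie]
        · rw [← hke]; linarith
  · intro a b i j hi hj hab haij i' j' hi' hii' hj' hjj'
    rw [mem_hatD hm] at hab haij ⊢
    simp only [] at hab haij ⊢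
    have h1 : LL m ℓ mu (a + i') ≤ LL m ℓ mu a := LL_antitone hm hmu (by linarith)
    have h2 : LL m ℓ lam (a + i) ≤ LL m ℓ lam (a + i') := LL_antitone hm hlam (by linarith)
    omega

theorem part3 {n m ℓ : ℕ} {lam mu : ℕ → ℤ} (hm : 1 ≤ m)
    (hml : ∀ i < m, mu i < lam i) :
    ∀ a : ℤ, ∃ b : ℤ, (a, b) ∈ hatD m ℓ lam mu := by
  intro a
  refine ⟨lam (idx m a) - kk m a * ℓ, ?_⟩
  rw [mem_hatD hm]
  have := hml (idx m a) (idx_lt hm a)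
  unfold LL
  simp only []
  omega

theorem part5 {n m ℓ : ℕ} {lam mu lam' mu' : ℕ → ℤ} (hm : 1 ≤ m)
    (hml : ∀ i < m, mu i < lam i) (hml' : ∀ i < m, mu' i < lam' i)
    (hEq : hatD m ℓ lam mu = hatD m ℓ lam' mu') :
    ∀ i < m, lam i = lam' i ∧ mu i = mu' i := by
  intro i hi
  have key : ∀ y : ℤ, (mu i + 1 ≤ y ∧ y ≤ lam i) ↔ (mu' i + 1 ≤ y ∧ y ≤ lam' i) := by
    intro y
    have h1 := (mem_hatD hm (lam := lam) (mu := mu) (((i:ℤ)+1), y)).symm.trans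
      (hEq ▸ mem_hatD hm (lam := lam') (mu := mu') (((i:ℤ)+1), y))
    simp only [LL_base hm _ hi] at h1
    exact h1
  have h2 := hml i hi
  have h3 := hml' i hi
  have k1 := (key (mu i + 1)).mp ⟨le_refl _, by omega⟩
  have k2 := (key (mu' i + 1)).mpr ⟨le_refl _, by omega⟩
  have k3 := (key (lam i)).mp ⟨by omega, le_refl _⟩
  have k4 := (key (lam' i)).mpr ⟨by omega, le_refl _⟩
  omega


namespace PSDaux2

open Classical in
noncomputable def row (Λ : Set (ℤ × ℤ)) (x : ℤ) : Set ℤ := {y | (x, y) ∈ Λ}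

noncomputable def rmax (Λ : Set (ℤ × ℤ)) (x : ℤ) : ℤ := sSup (row Λ x)
noncomputable def rmin (Λ : Set (ℤ × ℤ)) (x : ℤ) : ℤ := sInf (row Λ x)

open Classical in
noncomputable def gg (Λ : Set (ℤ × ℤ)) (x : ℤ) : ℤ :=
  if h : ∃ d : ℕ, (row Λ (x + d)).Nonempty then x + Nat.find h else x

noncomputable def EE (Λ : Set (ℤ × ℤ)) (x : ℤ) : ℤ := rmax Λ (gg Λ x)

open Classical in
noncomputable def MM (Λ : Set (ℤ × ℤ)) (x : ℤ) : ℤ :=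
  if (row Λ x).Nonempty then rmin Λ x - 1 else EE Λ x

section

variable {m ℓ : ℕ} {Λ : Set (ℤ × ℤ)}

variable (hm : 1 ≤ m)
  (hper : ∀ x y : ℤ, (x, y) ∈ Λ ↔ (x + m, y - ℓ) ∈ Λ)
  (hrect : ∀ x y x' y' x'' y'' : ℤ, (x, y) ∈ Λ → (x', y') ∈ Λ →
    x ≤ x'' → x'' ≤ x' → y ≤ y'' → y'' ≤ y' → (x'', y'') ∈ Λ)
  (hfin : ∀ x : ℤ, (row Λ x).Finite)
  (hex : ∀ x : ℤ, ∃ d : ℕ, (row Λ (x + d)).Nonempty)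

include hfin in
lemma rmax_mem {x : ℤ} (h : (row Λ x).Nonempty) : rmax Λ x ∈ row Λ x :=
  Int.csSup_mem h (hfin x).bddAbove

include hfin in
lemma rmin_mem {x : ℤ} (h : (row Λ x).Nonempty) : rmin Λ x ∈ row Λ x :=
  Int.csInf_mem h (hfin x).bddBelow

include hfin in
lemma le_rmax {x y : ℤ} (h : y ∈ row Λ x) : y ≤ rmax Λ x := le_csSup (hfin x).bddAbove h

include hfin in
lemma rmin_le {x y : ℤ} (h : y ∈ row Λ x) : rmin Λ x ≤ y := csInf_le (hfin x).bddBelow h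

include hrect in
lemma row_conv {x y y' y'' : ℤ} (h : y ∈ row Λ x) (h' : y' ∈ row Λ x)
    (h1 : y ≤ y'') (h2 : y'' ≤ y') : y'' ∈ row Λ x :=
  hrect x y x y' x y'' h h' le_rfl le_rfl h1 h2

include hrect hfin in
lemma row_eq_Icc {x : ℤ} (h : (row Λ x).Nonempty) :
    row Λ x = Set.Icc (rmin Λ x) (rmax Λ x) := by
  ext y
  constructor
  · intro hy; exact ⟨rmin_le hfin hy, le_rmax hfin hy⟩
  · rintro ⟨h1, h2⟩; exact row_conv hrect (rmin_mem hfin h) (rmax_mem hfin h) h1 h2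

include hper in
lemma row_shift (x y : ℤ) : y ∈ row Λ (x + m) ↔ y + ℓ ∈ row Λ x := by
  have := hper x (y + ℓ)
  simp only [row, Set.mem_setOf_eq] at *
  rw [this]
  constructor <;> intro h <;> [skip; skip] <;> · convert h using 2; omega

include hper in
lemma NE_shift (x : ℤ) : (row Λ (x + m)).Nonempty ↔ (row Λ x).Nonempty := by
  constructor
  · rintro ⟨y, hy⟩; exact ⟨y + ℓ, (row_shift hper x y).1 hy⟩
  · rintro ⟨y, hy⟩
    refine ⟨y - ℓ, (row_shift hper x (y - ℓ)).2 ?_⟩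
    simpa using hy

include hper hfin in
lemma rmax_shift {x : ℤ} (h : (row Λ x).Nonempty) : rmax Λ (x + m) = rmax Λ x - ℓ := by
  have h' : (row Λ (x + m)).Nonempty := (NE_shift hper x).2 h
  have h1 : rmax Λ x - ℓ ∈ row Λ (x + m) := by
    rw [row_shift hper]
    simpa using rmax_mem hfin h
  have h2 : rmax Λ (x + m) + ℓ ∈ row Λ x := (row_shift hper x _).1 (rmax_mem hfin h')
  have := le_rmax hfin h1
  have := le_rmax hfin h2
  omega

include hper hfin in
lemma rmin_shift {x : ℤ} (h : (row Λ x).Nonempty) : rmin Λ (x + m) = rmin Λ x - ℓ := by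
  have h' : (row Λ (x + m)).Nonempty := (NE_shift hper x).2 h
  have h1 : rmin Λ x - ℓ ∈ row Λ (x + m) := by
    rw [row_shift hper]
    simpa using rmin_mem hfin h
  have h2 : rmin Λ (x + m) + ℓ ∈ row Λ x := (row_shift hper x _).1 (rmin_mem hfin h')
  have := rmin_le hfin h1
  have := rmin_le hfin h2
  omega

include hex in
lemma gg_spec (x : ℤ) : (row Λ (gg Λ x)).Nonempty ∧ x ≤ gg Λ x ∧
    ∀ x' : ℤ, x ≤ x' → (row Λ x').Nonempty → gg Λ x ≤ x' := by
  classical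
  unfold gg
  rw [dif_pos (hex x)]
  refine ⟨Nat.find_spec (hex x), by omega, ?_⟩
  intro x' hx1 hx2
  have : ¬ ((x' - x).toNat < Nat.find (hex x)) := by
    intro hlt
    exact Nat.find_min (hex x) hlt (by rwa [show x + ((x' - x).toNat : ℤ) = x' by omega])
  omega

include hrect hfin in
lemma rmax_anti {x x' : ℤ} (hxx : x ≤ x') (h : (row Λ x).Nonempty)
    (h' : (row Λ x').Nonempty) : rmax Λ x' ≤ rmax Λ x := by
  rcases le_or_gt (rmax Λ x') (rmax Λ x) with hc | hc
  · exact hc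
  · have := hrect x (rmax Λ x) x' (rmax Λ x') x (rmax Λ x')
      (rmax_mem hfin h) (rmax_mem hfin h') le_rfl hxx (by omega) le_rfl
    have := le_rmax hfin this
    omega

include hrect hfin in
lemma rmin_anti {x x' : ℤ} (hxx : x ≤ x') (h : (row Λ x).Nonempty)
    (h' : (row Λ x').Nonempty) : rmin Λ x' ≤ rmin Λ x := by
  rcases le_or_gt (rmin Λ x') (rmin Λ x) with hc | hc
  · exact hc
  · have := hrect x (rmin Λ x) x' (rmin Λ x') x' (rmin Λ x)
      (rmin_mem hfin h) (rmin_mem hfin h') hxx le_rfl le_rfl (by omega)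
    have := rmin_le hfin this
    omega

include hrect hfin in
lemma fill {x x' x'' : ℤ} (h : (row Λ x).Nonempty) (h' : (row Λ x').Nonempty)
    (h1 : x ≤ x'') (h2 : x'' ≤ x') (h3 : rmin Λ x ≤ rmax Λ x') :
    (row Λ x'').Nonempty := by
  exact ⟨rmin Λ x, hrect x (rmin Λ x) x' (rmax Λ x') x'' (rmin Λ x)
    (rmin_mem hfin h) (rmax_mem hfin h') h1 h2 le_rfl h3⟩

include hrect hfin in
lemma gap {x x' e : ℤ} (h : (row Λ x).Nonempty) (h' : (row Λ x').Nonempty)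
    (h1 : x ≤ e) (h2 : e ≤ x') (h3 : ¬ (row Λ e).Nonempty) :
    rmax Λ x' < rmin Λ x := by
  by_contra hc
  exact h3 (fill hrect hfin h h' h1 h2 (by omega))

include hex in
lemma gg_eq_self {x : ℤ} (h : (row Λ x).Nonempty) : gg Λ x = x := by
  have hs := gg_spec hex (Λ := Λ) x
  have := hs.2.2 x le_rfl h
  omega

include hex in
lemma gg_mono : Monotone (gg Λ) := by
  intro x x' hxx
  have hs := gg_spec hex (Λ := Λ) x
  have hs' := gg_spec hex (Λ := Λ) x'
  exact hs.2.2 _ (le_trans hxx hs'.2.1) hs'.1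

include hper hex in
lemma gg_shift (x : ℤ) : gg Λ (x + m) = gg Λ x + m := by
  have hs := gg_spec hex (Λ := Λ) x
  have hs' := gg_spec hex (Λ := Λ) (x + m)
  have h1 : gg Λ (x + m) ≤ gg Λ x + m :=
    hs'.2.2 _ (by omega) ((NE_shift hper _).2 hs.1)
  have h2 : gg Λ x ≤ gg Λ (x + m) - m := by
    apply hs.2.2 _ (by omega)
    have := (NE_shift hper (gg Λ (x + m) - m)).1
    rw [show gg Λ (x + m) - m + m = gg Λ (x + m) by ring] at this
    exact this hs'.1
  omega

include hrect hfin hex in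
lemma EE_anti : Antitone (EE Λ) := by
  intro x x' hxx
  exact rmax_anti hrect hfin (gg_mono hex hxx) (gg_spec hex x).1 (gg_spec hex x').1

include hper hfin hex in
lemma EE_shift (x : ℤ) : EE Λ (x + m) = EE Λ x - ℓ := by
  unfold EE
  rw [gg_shift hper hex, rmax_shift hper hfin (gg_spec hex x).1]

include hfin hex in
lemma MM_le_EE (x : ℤ) : MM Λ x ≤ EE Λ x := by
  classical
  unfold MM
  split_ifs with h
  · have hg := gg_eq_self hex h
    unfold EE
    rw [hg]
    have := rmin_le hfin (rmax_mem hfin h)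
    omega
  · exact le_rfl

include hfin hex in
lemma MM_lt_EE {x : ℤ} (h : (row Λ x).Nonempty) : MM Λ x < EE Λ x := by
  classical
  unfold MM EE
  rw [if_pos h, gg_eq_self hex h]
  have := rmin_le hfin (rmax_mem hfin h)
  omega

include hper hrect hfin hex in
lemma MM_shift (x : ℤ) : MM Λ (x + m) = MM Λ x - ℓ := by
  classical
  unfold MM
  by_cases h : (row Λ x).Nonempty
  · rw [if_pos h, if_pos ((NE_shift hper x).2 h), rmin_shift hper hfin h]
    ring
  · rw [if_neg h, if_neg (fun hc => h ((NE_shift hper x).1 hc)),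
      EE_shift hper hfin hex]

include hper hrect hfin hex in
lemma MM_anti : Antitone (MM Λ) := by
  classical
  intro x x' hxx
  rcases eq_or_lt_of_le hxx with rfl | hlt
  · exact le_rfl
  unfold MM
  by_cases h : (row Λ x).Nonempty
  · rw [if_pos h]
    by_cases h' : (row Λ x').Nonempty
    · rw [if_pos h']
      have := rmin_anti hrect hfin hxx h h'
      omega
    · rw [if_neg h']
      have hg := (gg_spec hex x').1
      have hg2 := (gg_spec hex x').2.1
      have := gap hrect hfin h hg (le_of_lt hlt) hg2 h'
      unfold EE
      omega
  · rw [if_neg h]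
    have hgx := gg_spec hex (Λ := Λ) x
    rcases le_or_gt x' (gg Λ x) with hc | hc
    · -- gg x' = gg x
      have hgg : gg Λ x' = gg Λ x := by
        have h1 : gg Λ x ≤ gg Λ x' := gg_mono hex hxx
        have h2 : gg Λ x' ≤ gg Λ x := (gg_spec hex x').2.2 _ hc hgx.1
        omega
      by_cases h' : (row Λ x').Nonempty
      · rw [if_pos h']
        have hx'g : x' = gg Λ x' := (gg_eq_self hex h').symm
        unfold EE
        rw [← hgg, ← hx'g]
        have := rmin_le hfin (rmax_mem hfin h')
        omega
      · rw [if_neg h']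
        unfold EE
        rw [hgg]
    · by_cases h' : (row Λ x').Nonempty
      · rw [if_pos h']
        have h1 : rmin Λ x' ≤ rmin Λ (gg Λ x) := rmin_anti hrect hfin (le_of_lt hc) hgx.1 h'
        have h2 := rmin_le hfin (rmax_mem hfin hgx.1)
        unfold EE
        omega
      · rw [if_neg h']
        have hg' := gg_spec hex (Λ := Λ) x'
        have := gap hrect hfin hgx.1 hg'.1 (le_of_lt hc) hg'.2.1 h'
        have h2 := rmin_le hfin (rmax_mem hfin hgx.1)
        unfold EE
        omega

include hper in
lemma mem_shift_k (k x y : ℤ) : (x, y) ∈ Λ ↔ (x + k * m, y - k * ℓ) ∈ Λ := by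
  induction k using Int.induction_on with
  | zero => simp
  | succ k ih =>
    rw [show x + ((k:ℤ)+1) * m = x + k * m + m by ring,
        show y - ((k:ℤ)+1) * ℓ = y - k * ℓ - ℓ by ring, ih, ← hper]
  | pred k ih =>
    rw [show x + (-(k:ℤ) - 1) * m = x + (-(k:ℤ)) * m - m by ring,
        show y - (-(k:ℤ) - 1) * ℓ = y - (-(k:ℤ)) * ℓ + ℓ by ring, ih]
    have h2 := hper (x + -(k:ℤ) * m - m) (y - -(k:ℤ) * ℓ + ℓ)
    rw [show x + -(k:ℤ) * m - m + m = x + -(k:ℤ) * m by ring,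
        show y - -(k:ℤ)*ℓ + ℓ - ℓ = y - -(k:ℤ)*ℓ by ring] at h2
    exact h2.symm

lemma iter_shift (f : ℤ → ℤ) (hf : ∀ x : ℤ, f (x + m) = f x - ℓ) (k x : ℤ) :
    f (x + k * m) = f x - k * ℓ := by
  induction k using Int.induction_on with
  | zero => simp
  | succ k ih =>
    have h := hf (x + (k:ℤ) * m)
    rw [show x + ((k:ℤ)+1) * m = x + (k:ℤ) * m + m by ring, h, ih]
    ring
  | pred k ih =>
    have h := hf (x + (-(k:ℤ) - 1) * m)
    rw [show x + (-(k:ℤ) - 1) * m + m = x + -(k:ℤ) * m by ring, ih] at h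
    linarith

include hper hrect hfin hex in
omit hrect in
lemma EE_shift_k (k x : ℤ) : EE Λ (x + k * m) = EE Λ x - k * ℓ :=
  iter_shift _ (EE_shift hper hfin hex) k x

include hper hrect hfin hex in
lemma MM_shift_k (k x : ℤ) : MM Λ (x + k * m) = MM Λ x - k * ℓ :=
  iter_shift _ (MM_shift hper hrect hfin hex) k x

include hrect hfin hex in
lemma mem_iff (x y : ℤ) : (x, y) ∈ Λ ↔ MM Λ x + 1 ≤ y ∧ y ≤ EE Λ x := by
  classical
  constructor
  · intro h
    have hne : (row Λ x).Nonempty := ⟨y, h⟩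
    have h1 := rmin_le hfin (show y ∈ row Λ x from h)
    have h2 := le_rmax hfin (show y ∈ row Λ x from h)
    unfold MM EE
    rw [if_pos hne, gg_eq_self hex hne]
    omega
  · rintro ⟨h1, h2⟩
    by_cases hne : (row Λ x).Nonempty
    · unfold MM at h1; rw [if_pos hne] at h1
      unfold EE at h2; rw [gg_eq_self hex hne] at h2
      exact row_conv hrect (rmin_mem hfin hne) (rmax_mem hfin hne) (by omega) h2
    · exfalso
      unfold MM at h1
      rw [if_neg hne] at h1
      omega

include hm hper hrect hfin hex in
lemma count {n : ℕ} {D : Finset (ℤ × ℤ)} (hD1 : ↑D ⊆ Λ) (hD2 : D.card = n)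
    (hD3 : ∀ u ∈ Λ, ∃! v, v ∈ D ∧ ∃ k : ℤ, u = v + k • ((m:ℤ), -(ℓ:ℤ))) :
    (∑ i ∈ Finset.range m, (EE Λ ((i:ℤ)+1) - MM Λ ((i:ℤ)+1))) = (n:ℤ) := by
  classical
  have hcard : ∀ x : ℤ, (((hfin x).toFinset.card : ℕ) : ℤ) = EE Λ x - MM Λ x := by
    intro x
    by_cases hne : (row Λ x).Nonempty
    · have hIcc : (hfin x).toFinset = Finset.Icc (rmin Λ x) (rmax Λ x) := by
        apply Finset.coe_injective
        rw [Set.Finite.coe_toFinset, Finset.coe_Icc, row_eq_Icc hrect hfin hne]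
      have h1 := rmin_le hfin (rmax_mem hfin hne)
      have hMM : MM Λ x = rmin Λ x - 1 := by unfold MM; rw [if_pos hne]
      have hEE : EE Λ x = rmax Λ x := by unfold EE; rw [gg_eq_self hex hne]
      rw [hIcc, Int.card_Icc,
        Int.toNat_of_nonneg (a := rmax Λ x + 1 - rmin Λ x) (by omega)]
      omega
    · have hempty : (hfin x).toFinset = ∅ := by
        simp [Set.not_nonempty_iff_eq_empty.mp hne]
      have hMM : MM Λ x = EE Λ x := by unfold MM; rw [if_neg hne]
      rw [hempty, hMM]
      simp
  have hphi : ∀ v : ℤ × ℤ, v ∈ Λ →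
      (((PSDaux.idx m v.1 : ℤ) + 1, v.2 + PSDaux.kk m v.1 * ℓ) : ℤ × ℤ) ∈ Λ ∧
      (((PSDaux.idx m v.1 : ℤ) + 1, v.2 + PSDaux.kk m v.1 * ℓ) : ℤ × ℤ)
          = v + (-(PSDaux.kk m v.1)) • ((m:ℤ), -(ℓ:ℤ)) := by
    intro v hv
    have hd := PSDaux.decomp hm v.1
    have hnm := neg_mul (PSDaux.kk m v.1) (m:ℤ)
    constructor
    · have := (mem_shift_k hper (-(PSDaux.kk m v.1)) v.1 v.2).1 (by simpa using hv)
      rw [show v.1 + -(PSDaux.kk m v.1) * m = (PSDaux.idx m v.1 : ℤ) + 1 by omega,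
        show v.2 - -(PSDaux.kk m v.1) * ℓ = v.2 + PSDaux.kk m v.1 * ℓ by ring] at this
      exact this
    · refine Prod.ext ?_ ?_ <;>
        simp only [Prod.fst_add, Prod.snd_add, Prod.smul_mk, smul_eq_mul]
      · omega
      · ring
  set SF : Finset (ℤ × ℤ) := (Finset.range m).biUnion
    (fun i => ((hfin ((i:ℤ)+1)).toFinset).image (fun y => (((i:ℤ)+1), y))) with hSF
  have hSFmem : ∀ u : ℤ × ℤ, u ∈ SF ↔ (∃ i : ℕ, i < m ∧ u.1 = (i:ℤ)+1) ∧ u ∈ Λ := by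
    rintro ⟨a, b⟩
    simp only [hSF, Finset.mem_biUnion, Finset.mem_range, Finset.mem_image,
      Set.Finite.mem_toFinset, Prod.mk.injEq]
    constructor
    · rintro ⟨i, hi, y, hy, h1, h2⟩
      exact ⟨⟨i, hi, h1.symm⟩, by rw [← h1, ← h2]; exact hy⟩
    · rintro ⟨⟨i, hi, ha⟩, hu⟩
      exact ⟨i, hi, b, by rwa [← ha], ha.symm, rfl⟩
  have hSFcard : SF.card = ∑ i ∈ Finset.range m, ((hfin ((i:ℤ)+1)).toFinset).card := by
    rw [hSF, Finset.card_biUnion]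
    · exact Finset.sum_congr rfl fun i _ =>
        Finset.card_image_of_injective _ (fun a b h => by simpa using h)
    · intro i hi j hj hij
      simp only [Finset.disjoint_left, Finset.mem_image]
      rintro p ⟨y, _, rfl⟩ ⟨y', _, hE⟩
      have : (i : ℤ) = (j : ℤ) := by
        have := congrArg Prod.fst hE; simp at this; omega
      exact hij (by exact_mod_cast this)
  have hDS : D.card = SF.card := by
    apply Finset.card_bij
      (fun v _ => (((PSDaux.idx m v.1 : ℤ) + 1, v.2 + PSDaux.kk m v.1 * ℓ) : ℤ × ℤ))
    · intro v hv
      rw [hSFmem]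
      exact ⟨⟨PSDaux.idx m v.1, PSDaux.idx_lt hm v.1, rfl⟩, (hphi v (hD1 hv)).1⟩
    · intro v₁ hv₁ v₂ hv₂ hE
      obtain ⟨h₁Λ, h₁rep⟩ := hphi v₁ (hD1 hv₁)
      obtain ⟨h₂Λ, h₂rep⟩ := hphi v₂ (hD1 hv₂)
      obtain ⟨v, hv, hvuniq⟩ := hD3 _ h₁Λ
      have e₁ : v₁ = v := hvuniq v₁ ⟨hv₁, -(PSDaux.kk m v₁.1), h₁rep⟩
      have e₂ : v₂ = v := hvuniq v₂ ⟨hv₂, -(PSDaux.kk m v₂.1), by rw [hE]; exact h₂rep⟩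
      rw [e₁, e₂]
    · intro u hu
      obtain ⟨⟨i, hi, ha⟩, huΛ⟩ := (hSFmem u).1 hu
      obtain ⟨v, ⟨hvD, k, hk⟩, -⟩ := hD3 u huΛ
      refine ⟨v, hvD, ?_⟩
      rw [Prod.ext_iff] at hk
      simp only [Prod.fst_add, Prod.snd_add, Prod.smul_mk, smul_eq_mul] at hk
      obtain ⟨hk1, hk2⟩ := hk
      have hnm := neg_mul k (m:ℤ)
      have hnl := neg_mul k (ℓ:ℤ)
      have hmn := mul_neg k (ℓ:ℤ)
      have huq := PSDaux.uniq hm (x := v.1) (i := i) (k := -k) hi (by omega)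
      refine Prod.ext ?_ ?_
      · simp only []
        rw [← huq.1, ha]
      · simp only []
        rw [← huq.2]
        omega
  have hstep : ∑ i ∈ Finset.range m, (EE Λ ((i:ℤ)+1) - MM Λ ((i:ℤ)+1))
      = ∑ i ∈ Finset.range m, (((hfin ((i:ℤ)+1)).toFinset.card : ℕ) : ℤ) :=
    Finset.sum_congr rfl (fun i _ => (hcard _).symm)
  rw [hstep, ← Nat.cast_sum, ← hSFcard, ← hDS, hD2]

end

theorem construct {n m ℓ : ℕ} (hn : 1 ≤ n) (hm : 1 ≤ m) {Λ : Set (ℤ × ℤ)}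
    (hΛ : IsPSD n ((m : ℤ), -(ℓ : ℤ)) Λ) :
    ∃ lam mu : ℕ → ℤ,
      (isDom m ℓ lam ∧ isDom m ℓ mu ∧ (∀ i < m, mu i ≤ lam i) ∧
        (∑ i ∈ Finset.range m, (lam i - mu i)) = (n : ℤ)) ∧
      hatD m ℓ lam mu = Λ ∧
      ((∀ a : ℤ, ∃ b : ℤ, (a, b) ∈ Λ) → ∀ i < m, mu i < lam i) := by
  classical
  obtain ⟨himg, ⟨D, hD1, hD2, hD3⟩, hre⟩ := hΛ
  have hper : ∀ x y : ℤ, (x, y) ∈ Λ ↔ (x + m, y - ℓ) ∈ Λ := by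
    intro x y
    constructor
    · intro h
      have : ((x, y) : ℤ × ℤ) + ((m : ℤ), -(ℓ:ℤ)) ∈ Λ := by
        rw [← himg]; exact Set.mem_image_of_mem _ h
      rw [show ((x, y) : ℤ × ℤ) + ((m : ℤ), -(ℓ:ℤ)) = (x + m, y - ℓ) by
        simp [Prod.ext_iff]; ring] at this
      exact this
    · intro h
      rw [← himg] at h
      obtain ⟨w, hw, hweq⟩ := h
      have : w = (x, y) := by
        have h1 := congrArg Prod.fst hweq
        have h2 := congrArg Prod.snd hweq
        simp at h1 h2
        refine Prod.ext ?_ ?_ <;> simp <;> omega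
      rwa [← this]
  have hrect : ∀ x y x' y' x'' y'' : ℤ, (x, y) ∈ Λ → (x', y') ∈ Λ →
      x ≤ x'' → x'' ≤ x' → y ≤ y'' → y'' ≤ y' → (x'', y'') ∈ Λ := by
    intro x y x' y' x'' y'' h h' h1 h2 h3 h4
    have := hre x y (x' - x) (y' - y) (by omega) (by omega) h
      (by rw [show x + (x' - x) = x' by ring, show y + (y' - y) = y' by ring]; exact h')
      (x'' - x) (y'' - y) (by omega) (by omega) (by omega) (by omega)
    rwa [show x + (x'' - x) = x'' by ring, show y + (y'' - y) = y'' by ring] at this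
  have hfin : ∀ x : ℤ, (row Λ x).Finite := by
    intro x
    apply Set.Finite.subset (Finset.finite_toSet
      (D.image (fun v => v.2 - ((x - v.1) / m) * ℓ)))
    intro y hy
    obtain ⟨v, ⟨hvD, k, hk⟩, -⟩ := hD3 (x, y) hy
    rw [Prod.ext_iff] at hk
    simp only [Prod.fst_add, Prod.snd_add, Prod.smul_mk, smul_eq_mul] at hk
    obtain ⟨hk1, hk2⟩ := hk
    simp only [Finset.coe_image, Set.mem_image, Finset.mem_coe]
    refine ⟨v, hvD, ?_⟩
    have he : x - v.1 = k * m := by omega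
    rw [he, Int.mul_ediv_cancel k (by positivity : (m:ℤ) ≠ 0)]
    have := mul_neg k (ℓ:ℤ)
    omega
  have hex : ∀ x : ℤ, ∃ d : ℕ, (row Λ (x + d)).Nonempty := by
    intro x
    obtain ⟨u₀, hu₀⟩ := Finset.card_pos.mp (by omega : 0 < D.card)
    have hu₀Λ : u₀ ∈ Λ := hD1 hu₀
    set k : ℤ := max (x - u₀.1) 0 with hk
    have hk0 : 0 ≤ k := le_max_right _ _
    have hkm : k ≤ k * m := le_mul_of_one_le_right hk0 (by exact_mod_cast hm)
    have hge : x ≤ u₀.1 + k * m := by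
      have : x - u₀.1 ≤ k := le_max_left _ _
      omega
    refine ⟨(u₀.1 + k * m - x).toNat, ?_⟩
    have hxd : x + ((u₀.1 + k * m - x).toNat : ℤ) = u₀.1 + k * m := by omega
    rw [hxd]
    exact ⟨u₀.2 - k * ℓ, (mem_shift_k hper k u₀.1 u₀.2).1 (by simpa using hu₀Λ)⟩
  refine ⟨fun i => EE Λ ((i:ℤ)+1), fun i => MM Λ ((i:ℤ)+1), ⟨⟨?_, ?_⟩, ⟨?_, ?_⟩, ?_, ?_⟩, ?_, ?_⟩
  · intro i j hij hj
    exact EE_anti hrect hfin hex (by exact_mod_cast by omega : ((i:ℤ)+1) ≤ ((j:ℤ)+1))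
  · have hc : ((m - 1 : ℕ) : ℤ) + 1 = (m : ℤ) := by
      have : (1:ℕ) ≤ m := hm
      push_cast [Nat.cast_sub this]
      ring
    show EE Λ (((0:ℕ):ℤ)+1) - EE Λ (((m-1:ℕ):ℤ)+1) ≤ (ℓ:ℤ)
    rw [hc]
    have h1 := EE_shift hper hfin hex 1
    have h2 := EE_anti hrect hfin hex (show (m:ℤ) ≤ 1 + m by omega)
    push_cast at h1 h2 ⊢
    omega
  · intro i j hij hj
    exact MM_anti hper hrect hfin hex (by exact_mod_cast by omega : ((i:ℤ)+1) ≤ ((j:ℤ)+1))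
  · have hc : ((m - 1 : ℕ) : ℤ) + 1 = (m : ℤ) := by
      have : (1:ℕ) ≤ m := hm
      push_cast [Nat.cast_sub this]
      ring
    show MM Λ (((0:ℕ):ℤ)+1) - MM Λ (((m-1:ℕ):ℤ)+1) ≤ (ℓ:ℤ)
    rw [hc]
    have h1 := MM_shift hper hrect hfin hex 1
    have h2 := MM_anti hper hrect hfin hex (show (m:ℤ) ≤ 1 + m by omega)
    push_cast at h1 h2 ⊢
    omega
  · intro i _
    exact MM_le_EE hfin hex _
  · exact count hm hper hrect hfin hex hD1 hD2 hD3
  · ext ⟨x, y⟩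
    rw [PSDaux.mem_hatD hm]
    have hLLE : PSDaux.LL m ℓ (fun i => EE Λ ((i:ℤ)+1)) x = EE Λ x := by
      unfold PSDaux.LL
      show EE Λ ((PSDaux.idx m x : ℤ) + 1) - PSDaux.kk m x * ℓ = EE Λ x
      have hd := PSDaux.decomp hm x
      have := EE_shift_k hper hfin hex (PSDaux.kk m x) ((PSDaux.idx m x : ℤ) + 1)
      rw [← hd] at this
      omega
    have hLLM : PSDaux.LL m ℓ (fun i => MM Λ ((i:ℤ)+1)) x = MM Λ x := by
      unfold PSDaux.LL
      show MM Λ ((PSDaux.idx m x : ℤ) + 1) - PSDaux.kk m x * ℓ = MM Λ x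
      have hd := PSDaux.decomp hm x
      have := MM_shift_k hper hrect hfin hex (PSDaux.kk m x) ((PSDaux.idx m x : ℤ) + 1)
      rw [← hd] at this
      omega
    simp only [hLLE, hLLM]
    exact (mem_iff hrect hfin hex x y).symm
  · intro hall i _
    exact MM_lt_EE hfin hex ⟨_, (hall ((i:ℤ)+1)).choose_spec⟩

end PSDaux2

end PSDaux

/-- `(λ,μ) ↦ λ/μ^` is a surjection `𝒥_{m,ℓ} → 𝒟ⁿ_{(m,-ℓ)}`, and its
restriction to `𝒥*_{m,ℓ}` is a bijection onto `𝒟^{*n}_{(m,-ℓ)}` (diagrams with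
no empty rows). -/
theorem hatD_surj_bij (n m ℓ : ℕ) (hn : 2 ≤ n) (hm : 1 ≤ m) :
    (∀ lam mu : ℕ → ℤ, memJ n m ℓ lam mu →
        IsPSD n ((m : ℤ), -(ℓ : ℤ)) (hatD m ℓ lam mu)) ∧
    (∀ Λ : Set (ℤ × ℤ), IsPSD n ((m : ℤ), -(ℓ : ℤ)) Λ →
        ∃ lam mu : ℕ → ℤ, memJ n m ℓ lam mu ∧ hatD m ℓ lam mu = Λ) ∧
    (∀ lam mu : ℕ → ℤ, memJstar n m ℓ lam mu →
        ∀ a : ℤ, ∃ b : ℤ, (a, b) ∈ hatD m ℓ lam mu) ∧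
    (∀ Λ : Set (ℤ × ℤ), IsPSD n ((m : ℤ), -(ℓ : ℤ)) Λ →
        (∀ a : ℤ, ∃ b : ℤ, (a, b) ∈ Λ) →
        ∃ lam mu : ℕ → ℤ, memJstar n m ℓ lam mu ∧ hatD m ℓ lam mu = Λ) ∧
    (∀ lam mu lam' mu' : ℕ → ℤ, memJstar n m ℓ lam mu → memJstar n m ℓ lam' mu' →
        hatD m ℓ lam mu = hatD m ℓ lam' mu' → ∀ i < m, lam i = lam' i ∧ mu i = mu' i) := by
  
  refine ⟨?_, ?_, ?_, ?_, ?_⟩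
  · rintro lam mu ⟨-, hlam, hmu, hml, hsum⟩
    exact PSDaux.part1 hm hlam hmu hml hsum
  · intro Λ hΛ
    obtain ⟨lam, mu, ⟨h1, h2, h3, h4⟩, hEq, -⟩ := PSDaux.PSDaux2.construct (by omega) hm hΛ
    exact ⟨lam, mu, ⟨hm, h1, h2, h3, h4⟩, hEq⟩
  · rintro lam mu ⟨-, hlam, hmu, hml, hsum⟩
    exact PSDaux.part3 (n := n) hm hml
  · intro Λ hΛ hall
    obtain ⟨lam, mu, ⟨h1, h2, h3, h4⟩, hEq, hstrict⟩ := PSDaux.PSDaux2.construct (by omega) hm hΛ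
    exact ⟨lam, mu, ⟨hm, h1, h2, hstrict hall, h4⟩, hEq⟩
  · rintro lam mu lam' mu' ⟨-, -, -, hml, -⟩ ⟨-, -, -, hml', -⟩ hEq
    exact PSDaux.part5 (n := n) hm hml hml' hEq
end

section
/- For (λ,μ) ∈ J_{m,ℓ}, the set of row increasing tableaux on λ/μ^ equals Ẇ^{λ-μ} T_0, the orbit of the row reading tableau T_0 under the set of minimal length coset representatives for Ẇ/Ẇ_{λ-μ}. -/
/-- Partial sums `n_t = Σ_{s ≤ t} (λ_s - μ_s)` (`0`-indexed: `ps t = n_t`). -/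
def ps (lam mu : ℕ → ℤ) (t : ℕ) : ℤ := ∑ s ∈ Finset.range t, (lam s - mu s)

/-- `T₀` is the row reading tableau on `λ/μ^`:
`T₀(i, μ_i + j) = Σ_{k<i}(λ_k - μ_k) + j`. -/
def IsRowReading (n m ℓ : ℕ) (lam mu : ℕ → ℤ) (T0 : ℤ × ℤ → ℤ) : Prop :=
  IsTab n m ℓ (hatD m ℓ lam mu) T0 ∧
  ∀ i : ℕ, i < m → ∀ j : ℤ, 1 ≤ j → j ≤ lam i - mu i →
    T0 ((i : ℤ) + 1, mu i + j) = ps lam mu i + j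

/-! Horizontally adjacent cells of `λ/μ^` are translates by `k(m,-ℓ)` of adjacent cells
`(i+1, μ_i+j)`, `(i+1, μ_i+j+1)` of `λ/μ`, on which `T₀` takes the consecutive values
`n_i+j`, `n_i+j+1` shifted by `kn`. Since `w` commutes with translation by `n`, `w T₀` is row
increasing iff `w(x) < w(x+1)` whenever `x, x+1` lie in one block `(n_t, n_{t+1}]`, i.e. iff `w`
is increasing on every block. -/

theorem add_zsmul_mem_of_add_mem_iff {G : Type*} [AddGroup G] {S : Set G} {v : G}
    (hS : ∀ u, u + v ∈ S ↔ u ∈ S) {u : G} (hu : u ∈ S) (k : ℤ) : u + k • v ∈ S := by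
  induction k using Int.induction_on with
  | zero => simpa using hu
  | succ k ih => rwa [add_zsmul, one_zsmul, ← add_assoc, hS]
  | pred k ih =>
    rw [← hS, add_assoc, ← add_one_zsmul]
    simpa using ih

theorem map_add_zsmul_of_map_add {G H : Type*} [AddGroup G] [AddGroup H] {S : Set G}
    {f : G → H} {v : G} {c : H} (hS : ∀ u, u + v ∈ S ↔ u ∈ S)
    (hf : ∀ u ∈ S, f (u + v) = f u + c) {u : G} (hu : u ∈ S) (k : ℤ) :
    f (u + k • v) = f u + k • c := by
  induction k using Int.induction_on with
  | zero => simp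
  | succ k ih =>
    rw [add_zsmul, one_zsmul, ← add_assoc, hf _ (add_zsmul_mem_of_add_mem_iff hS hu k), ih,
      add_zsmul, one_zsmul, add_assoc]
  | pred k ih =>
    have hstep := hf _ (add_zsmul_mem_of_add_mem_iff hS hu (-(k : ℤ) - 1))
    rw [add_assoc, ← add_one_zsmul, sub_add_cancel, ih] at hstep
    rw [eq_sub_iff_add_eq.mpr hstep.symm, sub_zsmul, one_zsmul, add_sub_assoc, sub_eq_add_neg]

theorem strictMonoOn_Ioc_iff_lt_add_one {α : Type*} [Preorder α] {f : ℤ → α} {a b : ℤ} :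
    StrictMonoOn f (Set.Ioc a b) ↔ ∀ x, a < x → x + 1 ≤ b → f x < f (x + 1) := by
  refine ⟨fun h x hx hxb => h ⟨hx, by omega⟩ ⟨by omega, hxb⟩ (lt_add_one x), fun h => ?_⟩
  exact strictMonoOn_of_lt_add_one Set.ordConnected_Ioc fun x _ hx hx' => h x hx.1 hx'.2

section RowReading

variable {n m ℓ : ℕ} {lam mu : ℕ → ℤ}

theorem add_period_mem_hatD_iff {u : ℤ × ℤ} :
    u + ((m : ℤ), -(ℓ : ℤ)) ∈ hatD m ℓ lam mu ↔ u ∈ hatD m ℓ lam mu := by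
  constructor
  · rintro ⟨k, i, hi, h1, h2, h3⟩
    refine ⟨k - 1, i, hi, ?_, ?_, ?_⟩ <;> simp only [Prod.fst_add, Prod.snd_add] at * <;> linarith
  · rintro ⟨k, i, hi, h1, h2, h3⟩
    refine ⟨k + 1, i, hi, ?_, ?_, ?_⟩ <;> simp only [Prod.fst_add, Prod.snd_add] at * <;> linarith

theorem mk_mem_hatD {i : ℕ} (hi : i < m) {j : ℤ} (hj₁ : 1 ≤ j) (hj₂ : j ≤ lam i - mu i) :
    ((i : ℤ) + 1, mu i + j) ∈ hatD m ℓ lam mu :=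
  ⟨0, i, hi, by ring, by linarith, by linarith⟩

theorem hatD_index_unique {i i' : ℕ} {k k' : ℤ} (hi : i < m) (hi' : i' < m)
    (h : (i : ℤ) + 1 + k * m = i' + 1 + k' * m) : i = i' ∧ k = k' := by
  have hm : (0 : ℤ) < m := by omega
  have decomp : ∀ i : ℕ, i < m → ∀ k : ℤ, ((i : ℤ) + k * m) / m = k ∧ ((i : ℤ) + k * m) % m = i :=
    fun i hi k => (Int.ediv_emod_unique hm).2 ⟨by ring, by positivity, by omega⟩
  obtain ⟨hk, hr⟩ := decomp i hi k
  obtain ⟨hk', hr'⟩ := decomp i' hi' k'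
  have h' : (i : ℤ) + k * m = i' + k' * m := by linarith
  rw [h'] at hk hr
  exact ⟨by omega, by omega⟩

theorem exists_of_mem_hatD_of_add_one_mem {a b : ℤ} (h : (a, b) ∈ hatD m ℓ lam mu)
    (h' : (a, b + 1) ∈ hatD m ℓ lam mu) :
    ∃ (k j : ℤ) (i : ℕ), i < m ∧ 1 ≤ j ∧ j + 1 ≤ lam i - mu i ∧
      (a, b) = ((i : ℤ) + 1, mu i + j) + k • ((m : ℤ), -(ℓ : ℤ)) := by
  obtain ⟨k, i, hi, ha, hb₁, -⟩ := h
  obtain ⟨k', i', hi', ha', -, hb₂'⟩ := h'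
  obtain ⟨rfl, rfl⟩ := hatD_index_unique hi hi' (ha.symm.trans ha')
  refine ⟨k, b + k * ℓ - mu i, i, hi, by linarith, by linarith, ?_⟩
  ext <;> simp only [Prod.fst_add, Prod.snd_add, Prod.smul_mk, smul_eq_mul] <;> linarith

theorem IsRowReading.apply_add_zsmul {T0 : ℤ × ℤ → ℤ} (hT0 : IsRowReading n m ℓ lam mu T0)
    {i : ℕ} (hi : i < m) {j : ℤ} (hj₁ : 1 ≤ j) (hj₂ : j ≤ lam i - mu i) (k : ℤ) :
    T0 (((i : ℤ) + 1, mu i + j) + k • ((m : ℤ), -(ℓ : ℤ))) = ps lam mu i + j + k * n := by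
  rw [map_add_zsmul_of_map_add (fun _ => add_period_mem_hatD_iff) hT0.1.2
    (mk_mem_hatD hi hj₁ hj₂), hT0.2 i hi j hj₁ hj₂, smul_eq_mul]

theorem ps_succ (t : ℕ) : ps lam mu (t + 1) = ps lam mu t + (lam t - mu t) :=
  Finset.sum_range_succ _ _

theorem rowInc_comp_rowReading_iff {T0 : ℤ × ℤ → ℤ} (hT0 : IsRowReading n m ℓ lam mu T0)
    {w : ℤ → ℤ} (hwp : ∀ j : ℤ, w (j + (n : ℤ)) = w j + (n : ℤ)) :
    RowInc (hatD m ℓ lam mu) (fun u => w (T0 u)) ↔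
      ∀ t < m, StrictMonoOn w (Set.Ioc (ps lam mu t) (ps lam mu (t + 1))) := by
  simp_rw [strictMonoOn_Ioc_iff_lt_add_one, ps_succ]
  constructor
  · intro h t ht x hx hxb
    have hj₁ : 1 ≤ x - ps lam mu t := by linarith
    have hj₂ : x - ps lam mu t + 1 ≤ lam t - mu t := by linarith
    have hrow := h _ _ (mk_mem_hatD ht hj₁ (by linarith))
      (add_assoc (mu t) _ 1 ▸ mk_mem_hatD ht (by linarith) hj₂)
    dsimp only at hrow
    rwa [add_assoc (mu t), hT0.2 t ht _ hj₁ (by linarith), hT0.2 t ht _ (by linarith) hj₂,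
      add_sub_cancel, ← add_assoc, add_sub_cancel] at hrow
  · intro h a b hab hab'
    obtain ⟨k, j, i, hi, hj₁, hj₂, hcell⟩ := exists_of_mem_hatD_of_add_one_mem hab hab'
    have hcell' : (a, b + 1) = ((i : ℤ) + 1, mu i + (j + 1)) + k • ((m : ℤ), -(ℓ : ℤ)) := by
      rw [Prod.ext_iff] at hcell ⊢
      simp only [Prod.fst_add, Prod.snd_add] at hcell ⊢
      constructor <;> linarith [hcell.1, hcell.2]
    have hw : ∀ x k : ℤ, w (x + k * n) = w x + k * n := fun x k => by
      simpa using map_add_zsmul_of_map_add (S := Set.univ) (by simp) (fun u _ => hwp u)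
        (Set.mem_univ x) k
    show w (T0 (a, b)) < w (T0 (a, b + 1))
    rw [hcell, hcell', hT0.apply_add_zsmul hi hj₁ (by linarith),
      hT0.apply_add_zsmul hi (by linarith) hj₂, hw, hw, ← add_assoc]
    exact add_lt_add_left (h i hi _ (by linarith) (by linarith)) _

end RowReading

/-- `w ∈ Ẇ^{λ-μ}` is encoded as `w(i) < w(j)` for all `i < j` in a common block
`(n_t, n_{t+1}]`. -/
theorem rowInc_iff_minCoset_general (n m ℓ : ℕ) (lam mu : ℕ → ℤ)
    (T0 : ℤ × ℤ → ℤ) (hT0 : IsRowReading n m ℓ lam mu T0)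
    (w : ℤ → ℤ)
    (hwp : ∀ j : ℤ, w (j + (n : ℤ)) = w j + (n : ℤ)) :
    RowInc (hatD m ℓ lam mu) (fun u => w (T0 u)) ↔
      ∀ (t : ℕ) (i j : ℤ), t < m → ps lam mu t < i → i < j → j ≤ ps lam mu (t + 1) →
        w i < w j := by
  rw [rowInc_comp_rowReading_iff hT0 hwp]
  exact ⟨fun h t i j ht hi hij hj => h t ht ⟨hi, hij.le.trans hj⟩ ⟨hi.trans hij, hj⟩ hij,
    fun h t ht i hi j hj hij => h t i j ht hi.1 hij hj.2⟩

/-- the set of row increasing tableaux on `λ/μ^` equals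
`Ẇ^{λ-μ} T₀`: for `w` in the extended affine Weyl group, `w T₀` is row
increasing iff `w ∈ Ẇ^{λ-μ}`, i.e. iff `w` maps every positive root
`α_{ij} ∈ Ṙ⁺_{λ-μ}` (pairs `i < j` lying in the same row block
`(n_t, n_{t+1}]`) to a positive root, i.e. `w(i) < w(j)` for such pairs. -/
theorem rowInc_iff_minCoset (n m ℓ : ℕ) (hn : 2 ≤ n) (lam mu : ℕ → ℤ)
    (hJ : memJ n m ℓ lam mu)
    (T0 : ℤ × ℤ → ℤ) (hT0 : IsRowReading n m ℓ lam mu T0)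
    (w : ℤ → ℤ) (hwb : Function.Bijective w)
    (hwp : ∀ j : ℤ, w (j + (n : ℤ)) = w j + (n : ℤ)) :
    RowInc (hatD m ℓ lam mu) (fun u => w (T0 u)) ↔
      ∀ (t : ℕ) (i j : ℤ), t < m → ps lam mu t < i → i < j → j ≤ ps lam mu (t + 1) →
        w i < w j :=
  rowInc_iff_minCoset_general n m ℓ lam mu T0 hT0 w hwp
end

section
/- Two standard tableaux on the same periodic skew diagram λ/μ^ with equal content functions are equal: if T, S ∈ Tab^{RC}(λ/μ^) and C_T = C_S then T = S. -/
/-!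
The cells of `λ/μ^` of content `c` form one diagonal `t ↦ (a + t, b + t)`, bounded below in `t`.
As `λ/μ^` is order-convex, the cell `(a + t + 1, b + t)` lies between two consecutive diagonal
cells, so a standard tableau is strictly increasing along the diagonal. A tableau is a bijection
onto `ℤ`, so it maps the diagonal onto the fibre `F⁻¹(c)`. Hence on each diagonal `T` and `S` are
both the order isomorphism of a well-ordered set onto `F⁻¹(c)`, which is unique.
-/

open Set

theorem StrictMonoOn.eqOn_of_image_eq {α β : Type*} [LinearOrder α] [Preorder β]
    {f g : α → β} {s : Set α} (hs : s.IsWF) (hf : StrictMonoOn f s) (hg : StrictMonoOn g s)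
    (h : f '' s = g '' s) : EqOn f g s := by
  have : WellFoundedLT s := ⟨hs⟩
  have hfg : s.domRestrict f = s.domRestrict g := by
    rwa [← (strictMono_domRestrict.2 hf).range_inj (strictMono_domRestrict.2 hg),
      range_domRestrict, range_domRestrict]
  exact fun x hx ↦ congrFun hfg ⟨x, hx⟩

section Diagonal

variable {Λ : Set (ℤ × ℤ)} {T : ℤ × ℤ → ℤ}

theorem diagonal_strictMonoOn (hΛ : Λ.OrdConnected) (hrow : RowInc Λ T) (hcol : ColInc Λ T)
    (a b : ℤ) : StrictMonoOn (fun t ↦ T (a + t, b + t)) {t | (a + t, b + t) ∈ Λ} := by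
  have hdiag : Monotone fun t : ℤ ↦ (a + t, b + t) := fun _ _ h ↦ by
    simp only [Prod.mk_le_mk]; omega
  refine strictMonoOn_of_lt_add_one (hΛ.preimage_mono hdiag) fun t _ ht ht1 ↦ ?_
  simp only [mem_ofPred_eq, ← add_assoc] at ht ht1 ⊢
  have hcorner : (a + t + 1, b + t) ∈ Λ :=
    hΛ.out ht ht1 ⟨by simp [Prod.mk_le_mk], by simp [Prod.mk_le_mk]⟩
  exact (hcol _ _ ht hcorner).trans (hrow _ _ hcorner ht1)

theorem image_diagonal_eq_preimage_content {F : ℤ → ℤ} (hT : SurjOn T Λ univ)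
    (hF : IsContent Λ T F) (a b : ℤ) :
    (fun t ↦ T (a + t, b + t)) '' {t | (a + t, b + t) ∈ Λ} = F ⁻¹' {b - a} := by
  ext i
  constructor
  · rintro ⟨t, ht, rfl⟩
    simp only [mem_preimage, hF _ ht, mem_singleton_iff]
    ring
  · intro hi
    obtain ⟨v, hv, rfl⟩ := hT (mem_univ i)
    have hcontent : v.2 - v.1 = b - a := (hF v hv).symm.trans hi
    have hv_eq : (a + (v.1 - a), b + (v.1 - a)) = v := Prod.ext (by ring) (by simp; omega)
    exact ⟨v.1 - a, show _ ∈ Λ by rwa [hv_eq], by simp only [hv_eq]⟩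

end Diagonal

/-- The periodic extension `λ_{i + km} = λ_i - kℓ` to all rows `a ∈ ℤ` of the `0`-indexed
row bounds `f i = λ_{i+1}`. -/
def periodicExt (m ℓ : ℕ) (f : ℕ → ℤ) (a : ℤ) : ℤ :=
  f ((a - 1) % m).toNat - (a - 1) / m * ℓ

section PeriodicExt

variable {m ℓ : ℕ} {f : ℕ → ℤ}

theorem exists_eq_add_one_add_mul (hm : 1 ≤ m) (a : ℤ) :
    ∃ i < m, ∃ k : ℤ, a = i + 1 + k * m :=
  have hm0 : (0 : ℤ) < m := by omega
  ⟨((a - 1) % m).toNat, by have := Int.emod_lt_of_pos (a - 1) hm0; omega, (a - 1) / m, by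
    have := Int.mul_ediv_add_emod (a - 1) m
    rw [Int.toNat_of_nonneg (Int.emod_nonneg _ hm0.ne')]
    linarith⟩

theorem periodicExt_add_one_add_mul {i : ℕ} (hi : i < m) (k : ℤ) :
    periodicExt m ℓ f (i + 1 + k * m) = f i - k * ℓ := by
  have hrow : (i : ℤ) + 1 + k * m - 1 = i + k * m := by ring
  have hm : (0 : ℤ) < m := by omega
  rw [periodicExt, hrow, Int.add_mul_emod_self_right, Int.emod_eq_of_lt (by omega) (by omega),
    Int.add_mul_ediv_right _ _ hm.ne', Int.ediv_eq_zero_of_lt (by omega) (by omega), zero_add,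
    Int.toNat_natCast]

theorem periodicExt_antitone (hm : 1 ≤ m) (hf : isDom m ℓ f) : Antitone (periodicExt m ℓ f) := by
  refine antitone_int_of_succ_le fun a ↦ ?_
  obtain ⟨i, hi, k, rfl⟩ := exists_eq_add_one_add_mul hm a
  rw [periodicExt_add_one_add_mul hi]
  rcases lt_or_eq_of_le (Nat.succ_le_of_lt hi) with hi1 | hi1
  · have hrow : (i : ℤ) + 1 + k * m + 1 = ↑(i + 1) + 1 + k * m := by push_cast; ring
    rw [hrow, periodicExt_add_one_add_mul hi1]
    linarith [hf.1 i (i + 1) (by omega) hi1]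
  · -- the last row wraps around to row `0` of the next period, where the spread bound applies
    have hrow : (i : ℤ) + 1 + k * m + 1 = ↑(0 : ℕ) + 1 + (k + 1) * m := by
      rw [← hi1]; push_cast; ring
    rw [hrow, periodicExt_add_one_add_mul (by omega)]
    have hspread := hf.2
    rw [← hi1, Nat.succ_sub_one] at hspread
    linarith

end PeriodicExt

section HatD

variable {m ℓ : ℕ} {lam mu : ℕ → ℤ}

theorem mem_hatD_iff (hm : 1 ≤ m) {a b : ℤ} :
    (a, b) ∈ hatD m ℓ lam mu ↔ periodicExt m ℓ mu a < b ∧ b ≤ periodicExt m ℓ lam a := by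
  constructor
  · rintro ⟨k, i, hi, rfl, hlow, hhigh⟩
    rw [periodicExt_add_one_add_mul hi, periodicExt_add_one_add_mul hi]
    constructor <;> linarith
  · obtain ⟨i, hi, k, rfl⟩ := exists_eq_add_one_add_mul hm a
    rw [periodicExt_add_one_add_mul hi, periodicExt_add_one_add_mul hi]
    exact fun ⟨hlow, hhigh⟩ ↦ ⟨k, i, hi, rfl, by linarith, by linarith⟩

theorem hatD_ordConnected (hm : 1 ≤ m) (hlam : isDom m ℓ lam) (hmu : isDom m ℓ mu) :
    (hatD m ℓ lam mu).OrdConnected := by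
  refine ⟨fun ⟨a, b⟩ hu ⟨c, d⟩ hv ⟨e, f⟩ ⟨hue, hev⟩ ↦ ?_⟩
  rw [Prod.mk_le_mk] at hue hev
  rw [mem_hatD_iff hm] at hu hv ⊢
  have := periodicExt_antitone hm hmu hue.1
  have := periodicExt_antitone hm hlam hev.1
  constructor <;> linarith

theorem bddBelow_diagonal_hatD (hm : 1 ≤ m) (hmu : isDom m ℓ mu) (a b : ℤ) :
    BddBelow {t | (a + t, b + t) ∈ hatD m ℓ lam mu} := by
  refine ⟨min 0 (periodicExt m ℓ mu a - b), fun t ht ↦ ?_⟩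
  rw [mem_ofPred_eq, mem_hatD_iff hm] at ht
  rcases le_or_gt 0 t with h | h
  · exact min_le_of_left_le h
  · have := periodicExt_antitone hm hmu (by omega : a + t ≤ a)
    exact min_le_of_right_le (by linarith [ht.1])

end HatD

theorem std_content_inj_general (n m ℓ : ℕ) (lam mu : ℕ → ℤ)
    (hJ : memJ n m ℓ lam mu)
    (T S : ℤ × ℤ → ℤ) (hT : IsStdTab n m ℓ (hatD m ℓ lam mu) T)
    (hS : IsStdTab n m ℓ (hatD m ℓ lam mu) S)
    (F : ℤ → ℤ) (hFT : IsContent (hatD m ℓ lam mu) T F)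
    (hFS : IsContent (hatD m ℓ lam mu) S F) :
    Set.EqOn T S (hatD m ℓ lam mu) := by
  obtain ⟨hm, hlam, hmu, -, -⟩ := hJ
  have hΛ := hatD_ordConnected hm hlam hmu
  rintro ⟨a, b⟩ hab
  have hdiag := StrictMonoOn.eqOn_of_image_eq (bddBelow_diagonal_hatD hm hmu a b).isWF
    (diagonal_strictMonoOn hΛ hT.2.1 hT.2.2 a b) (diagonal_strictMonoOn hΛ hS.2.1 hS.2.2 a b)
    (by rw [image_diagonal_eq_preimage_content hT.1.1.2.2 hFT,
      image_diagonal_eq_preimage_content hS.1.1.2.2 hFS])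
  simpa using hdiag (show (0 : ℤ) ∈ _ by simpa using hab)

/-- two standard tableaux on `λ/μ^` with the same content
function are equal (on the diagram). -/
theorem std_content_inj (n m ℓ : ℕ) (hn : 2 ≤ n) (lam mu : ℕ → ℤ)
    (hJ : memJ n m ℓ lam mu)
    (T S : ℤ × ℤ → ℤ) (hT : IsStdTab n m ℓ (hatD m ℓ lam mu) T)
    (hS : IsStdTab n m ℓ (hatD m ℓ lam mu) S)
    (F : ℤ → ℤ) (hFT : IsContent (hatD m ℓ lam mu) T F)
    (hFS : IsContent (hatD m ℓ lam mu) S F) :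
    Set.EqOn T S (hatD m ℓ lam mu) :=
  std_content_inj_general n m ℓ lam mu hJ T S hT hS F hFT hFS
end

section
/- Let (λ,μ) ∈ J_{m,ℓ}. If w ∈ Ẇ and i ∈ [0,n-1] satisfy that wT_0 is a standard tableau and l(w) > l(s_i w), then s_i w T_0 is also a standard tableau. -/
/-- The simple reflection `s_i` acting on `ℤ`. -/
def sFun (n : ℕ) (i : ℤ) : ℤ → ℤ := fun j =>
  if (j - i) % (n : ℤ) = 0 then j + 1
  else if (j - i - 1) % (n : ℤ) = 0 then j - 1
  else j

/-- The length of `w` in the extended affine Weyl group, realized as the number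
of inversions `{(i,j) : 1 ≤ i ≤ n, i < j, w(i) > w(j)}`. -/
noncomputable def len (n : ℕ) (w : ℤ → ℤ) : ℕ :=
  Set.ncard {p : ℤ × ℤ | 1 ≤ p.1 ∧ p.1 ≤ (n : ℤ) ∧ p.1 < p.2 ∧ w p.2 < w p.1}

/-!
Away from the pairs `{a, a + 1}` with `a ≡ i [ZMOD n]`, which it swaps, `s_i` is strictly
increasing; so `s_i w T₀` can only fail to be standard at adjacent cells `u, v` of `λ/μ^` with
`T₀ u < T₀ v`, `w (T₀ u) = a ≡ i` and `w (T₀ v) = a + 1`. Since the row reading tableau `T₀` is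
itself row and column increasing, this needs `w⁻¹ a < w⁻¹ (a + 1)`. But then, after translating
that pair into the window `[1, n]`, the inversions of `s_i w` are those of `w` together with that
pair, so `l(s_i w) ≥ l(w)`.
-/

open AddConstMapClass

section SimpleReflection

variable {n : ℕ} {i a b : ℤ}

lemma sFun_eq_ite (n : ℕ) (i a : ℤ) :
    sFun n i a = if (n : ℤ) ∣ a - i then a + 1 else if (n : ℤ) ∣ a - i - 1 then a - 1 else a := by
  simp only [sFun, Int.dvd_iff_emod_eq_zero]

lemma sFun_of_dvd (h : (n : ℤ) ∣ a - i) : sFun n i a = a + 1 := by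
  rw [sFun_eq_ite, if_pos h]

lemma sFun_of_dvd_sub_one (hn : n ≠ 1) (h : (n : ℤ) ∣ a - i - 1) : sFun n i a = a - 1 := by
  have hndvd : ¬ (n : ℤ) ∣ a - i := fun h' => by
    have h1 : (n : ℤ) ∣ a - i - (a - i - 1) := dvd_sub h' h
    rw [sub_sub_cancel] at h1
    exact hn (Nat.dvd_one.mp (by exact_mod_cast h1))
  rw [sFun_eq_ite, if_neg hndvd, if_pos h]

lemma sFun_of_not_dvd (h : ¬ (n : ℤ) ∣ a - i) (h' : ¬ (n : ℤ) ∣ a - i - 1) : sFun n i a = a := by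
  rw [sFun_eq_ite, if_neg h, if_neg h']

lemma sFun_add_natCast (n : ℕ) (i a : ℤ) : sFun n i (a + n) = sFun n i a + n := by
  rw [sFun_eq_ite, sFun_eq_ite, show a + n - i = a - i + n by ring,
    show a - i + n - 1 = a - i - 1 + n by ring]
  simp only [dvd_add_self_right]
  split_ifs <;> ring

lemma sFun_involutive (hn : n ≠ 1) (i : ℤ) : Function.Involutive (sFun n i) := by
  intro a
  by_cases h : (n : ℤ) ∣ a - i
  · rw [sFun_of_dvd h, sFun_of_dvd_sub_one hn (by convert h using 1; ring)]; ring
  by_cases h' : (n : ℤ) ∣ a - i - 1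
  · rw [sFun_of_dvd_sub_one hn h', sFun_of_dvd (by convert h' using 1; ring)]; ring
  · rw [sFun_of_not_dvd h h', sFun_of_not_dvd h h']

lemma sFun_lt_sFun (hab : a < b) (h : (n : ℤ) ∣ a - i → b ≠ a + 1) :
    sFun n i a < sFun n i b := by
  rw [sFun_eq_ite n i a, sFun_eq_ite n i b]
  by_cases ha : (n : ℤ) ∣ a - i
  · have hb1 := h ha
    by_cases hb : (n : ℤ) ∣ b - i
    · simp only [if_pos ha, if_pos hb]; omega
    by_cases hb' : (n : ℤ) ∣ b - i - 1
    · obtain rfl | hb2 : b = a + 2 ∨ a + 2 < b := by omega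
      · have h1 : (n : ℤ) ∣ a + 2 - i - 1 - (a - i) := dvd_sub hb' ha
        rw [show a + 2 - i - 1 - (a - i) = 1 by ring] at h1
        exact absurd (h1.trans (one_dvd _)) hb
      · simp only [if_pos ha, if_neg hb, if_pos hb']; omega
    · simp only [if_pos ha, if_neg hb, if_neg hb']; omega
  by_cases ha' : (n : ℤ) ∣ a - i - 1
  · simp only [if_neg ha, if_pos ha']
    split_ifs <;> omega
  by_cases hb : (n : ℤ) ∣ b - i
  · simp only [if_neg ha, if_neg ha', if_pos hb]; omega
  by_cases hb' : (n : ℤ) ∣ b - i - 1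
  · obtain rfl | hb2 : b = a + 1 ∨ a + 1 < b := by omega
    · exact absurd (by convert hb' using 1; ring) ha
    · simp only [if_neg ha, if_neg ha', if_neg hb, if_pos hb']; omega
  · simp only [if_neg ha, if_neg ha', if_neg hb, if_neg hb']; omega

end SimpleReflection

section Descent

variable {n : ℕ} {w : ℤ → ℤ}

def inversions (n : ℕ) (w : ℤ → ℤ) : Set (ℤ × ℤ) :=
  {p | 1 ≤ p.1 ∧ p.1 ≤ (n : ℤ) ∧ p.1 < p.2 ∧ w p.2 < w p.1}

lemma len_eq_ncard_inversions (n : ℕ) (w : ℤ → ℤ) : len n w = (inversions n w).ncard := rfl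

lemma apply_add_mul_of_periodic (hwp : ∀ j : ℤ, w (j + n) = w j + n) (x c : ℤ) :
    w (x + c * n) = w x + c * n := by
  simpa using map_add_zsmul (⟨w, hwp⟩ : AddConstMap ℤ ℤ (n : ℤ) (n : ℤ)) x c

/-- The pairs `(w⁻¹ a, w⁻¹ (a + 1))` with `a ≡ i [ZMOD n]` are translates of each other. -/
lemma exists_translate_of_dvd_of_succ (hw : Function.Injective w)
    (hwp : ∀ j : ℤ, w (j + n) = w j + n) {i x y p q : ℤ}
    (hx : (n : ℤ) ∣ w x - i) (hy : w y = w x + 1) (hp : (n : ℤ) ∣ w p - i) (hq : w q = w p + 1) :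
    ∃ c : ℤ, p = x + c * n ∧ q = y + c * n := by
  obtain ⟨c, hc⟩ : (n : ℤ) ∣ w p - w x := by simpa using dvd_sub hp hx
  have hwp' : w p = w (x + c * n) := by rw [apply_add_mul_of_periodic hwp]; linarith
  refine ⟨c, hw hwp', hw ?_⟩
  rw [apply_add_mul_of_periodic hwp, hq, hy, hwp', apply_add_mul_of_periodic hwp]
  ring

lemma inversions_sFun_comp (hn : 2 ≤ n) (hw : Function.Injective w)
    (hwp : ∀ j : ℤ, w (j + n) = w j + n) {i x y : ℤ} (hx1 : 1 ≤ x) (hxn : x ≤ n) (hxy : x < y)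
    (hx : (n : ℤ) ∣ w x - i) (hy : w y = w x + 1) :
    inversions n (fun j => sFun n i (w j)) = insert (x, y) (inversions n w) := by
  ext ⟨p, q⟩
  simp only [inversions, Set.mem_ofPred_eq, Set.mem_insert_iff, Prod.mk.injEq]
  constructor
  · rintro ⟨hp1, hpn, hpq, hs⟩
    rcases lt_trichotomy (w q) (w p) with hlt | heq | hlt
    · exact Or.inr ⟨hp1, hpn, hpq, hlt⟩
    · exact absurd (hw heq) hpq.ne'
    · have hpair : (n : ℤ) ∣ w p - i ∧ w q = w p + 1 := by
        by_contra hpair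
        exact hs.not_gt (sFun_lt_sFun hlt fun hp hq => hpair ⟨hp, hq⟩)
      obtain ⟨c, rfl, rfl⟩ := exists_translate_of_dvd_of_succ hw hwp hx hy hpair.1 hpair.2
      have hc : c = 0 := by nlinarith
      simp [hc]
  · rintro (⟨rfl, rfl⟩ | ⟨hp1, hpn, hpq, hlt⟩)
    · have hn1 : n ≠ 1 := by omega
      refine ⟨hx1, hxn, hxy, ?_⟩
      rw [sFun_of_dvd hx, hy,
        sFun_of_dvd_sub_one hn1 (by rwa [add_sub_right_comm, add_sub_cancel_right])]
      omega
    · refine ⟨hp1, hpn, hpq, sFun_lt_sFun hlt fun hq hp => ?_⟩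
      obtain ⟨c, rfl, rfl⟩ := exists_translate_of_dvd_of_succ hw hwp hx hy hq hp
      omega

lemma len_le_len_sFun_comp (hn : 2 ≤ n) (hw : Function.Injective w)
    (hwp : ∀ j : ℤ, w (j + n) = w j + n) {i x y : ℤ} (hxy : x < y)
    (hx : (n : ℤ) ∣ w x - i) (hy : w y = w x + 1) :
    len n w ≤ len n (fun j => sFun n i (w j)) := by
  have hn0 : (0 : ℤ) < n := by omega
  -- translate `x` into the window `[1, n]`
  set c := (x - 1) / n
  have hmod := Int.emod_add_mul_ediv (x - 1) n
  have hr0 := Int.emod_nonneg (x - 1) hn0.ne'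
  have hrn := Int.emod_lt_of_pos (x - 1) hn0
  have hx' : (n : ℤ) ∣ w (x + -c * n) - i := by
    rw [apply_add_mul_of_periodic hwp, show w x + -c * n - i = w x - i - c * n by ring]
    exact dvd_sub hx (dvd_mul_left _ _)
  have hy' : w (y + -c * n) = w (x + -c * n) + 1 := by
    rw [apply_add_mul_of_periodic hwp, apply_add_mul_of_periodic hwp, hy]; ring
  rw [len_eq_ncard_inversions, len_eq_ncard_inversions,
    inversions_sFun_comp hn hw hwp (by nlinarith) (by nlinarith) (by omega) hx' hy']
  exact Set.ncard_le_ncard_insert _ _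

lemma lt_of_len_sFun_comp_lt (hn : 2 ≤ n) (hw : Function.Injective w)
    (hwp : ∀ j : ℤ, w (j + n) = w j + n) {i x y : ℤ}
    (hlen : len n (fun j => sFun n i (w j)) < len n w)
    (hx : (n : ℤ) ∣ w x - i) (hy : w y = w x + 1) : y < x := by
  by_contra! hxy
  have hne : x ≠ y := by rintro rfl; omega
  exact (len_le_len_sFun_comp hn hw hwp (lt_of_le_of_ne hxy hne) hx hy).not_gt hlen

lemma sFun_lt_sFun_of_len_sFun_comp_lt (hn : 2 ≤ n) (hw : Function.Injective w)
    (hwp : ∀ j : ℤ, w (j + n) = w j + n) {i a b : ℤ}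
    (hlen : len n (fun j => sFun n i (w j)) < len n w) (hab : a < b) (hwab : w a < w b) :
    sFun n i (w a) < sFun n i (w b) :=
  sFun_lt_sFun hwab fun hx hy => (lt_of_len_sFun_comp_lt hn hw hwp hlen hx hy).not_gt hab

end Descent

section RowReading

variable {n m ℓ : ℕ} {lam mu : ℕ → ℤ} {T0 : ℤ × ℤ → ℤ}

lemma row_index_unique {i i' : ℕ} {k k' : ℤ} (hi : i < m) (hi' : i' < m)
    (h : (i : ℤ) + k * m = i' + k' * m) : i = i' ∧ k = k' := by
  have hk : k = k' := by
    by_contra hne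
    rcases lt_or_gt_of_ne hne with hlt | hlt <;> nlinarith
  subst hk
  exact ⟨by exact_mod_cast (by linarith : (i : ℤ) = i'), rfl⟩

lemma IsRowReading.apply (hT0 : IsRowReading n m ℓ lam mu T0) {i : ℕ} (hi : i < m) (k b : ℤ)
    (hb1 : mu i + 1 ≤ b + k * ℓ) (hb2 : b + k * ℓ ≤ lam i) :
    T0 ((i : ℤ) + 1 + k * m, b) = ps lam mu i + (b + k * ℓ - mu i) + k * n := by
  set j := b + k * ℓ - mu i
  let g : ℤ → ℤ := fun k => T0 ((i : ℤ) + 1 + k * m, mu i + j - k * ℓ)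
  have hg : ∀ k, g (k + 1) = g k + n := fun k => by
    have hcell := hT0.1.2 ((i : ℤ) + 1 + k * m, mu i + j - k * ℓ)
      ⟨k, i, hi, rfl, by simp only; constructor <;> linarith⟩
    simp only [g, ← hcell, Prod.mk_add_mk]
    congr 2 <;> ring
  have h0 : g 0 = ps lam mu i + j := by simpa [g] using hT0.2 i hi j (by linarith) (by linarith)
  have := map_add_int' (⟨g, hg⟩ : AddConstMap ℤ ℤ 1 (n : ℤ)) 0 k
  simp only [AddConstMap.coe_mk, zero_add, smul_eq_mul, Int.cast_id] at this
  rw [show b = mu i + j - k * ℓ by ring]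
  simp only [g] at this h0
  rw [this, h0]

lemma IsRowReading.rowInc (hT0 : IsRowReading n m ℓ lam mu T0) :
    RowInc (hatD m ℓ lam mu) T0 := by
  rintro a b ⟨k, i, hi, rfl, hb1, hb2⟩ ⟨k', i', hi', ha', hb1', hb2'⟩
  simp only at hb1 hb2 hb1' hb2' ha'
  obtain ⟨rfl, rfl⟩ := row_index_unique (k := k) (k' := k') hi hi' (by linarith)
  rw [hT0.apply hi k b hb1 hb2, hT0.apply hi k (b + 1) hb1' hb2']
  linarith

lemma IsRowReading.colInc (hT0 : IsRowReading n m ℓ lam mu T0) (hsum : ps lam mu m = n) :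
    ColInc (hatD m ℓ lam mu) T0 := by
  rintro a b ⟨k, i, hi, rfl, hb1, hb2⟩ ⟨k', i', hi', ha', hb1', hb2'⟩
  simp only at hb1 hb2 hb1' hb2' ha'
  rw [hT0.apply hi k b hb1 hb2, ha', hT0.apply hi' k' b hb1' hb2']
  by_cases hlast : i + 1 < m
  · obtain ⟨rfl, rfl⟩ := row_index_unique (k := k) (k' := k') hlast hi' (by push_cast; linarith)
    have hps : ps lam mu (i + 1) = ps lam mu i + (lam i - mu i) := Finset.sum_range_succ _ i
    linarith
  · -- the cell below the last row of a translate is in the first row of the next one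
    have hm : (i : ℤ) + 1 = m := by norm_cast; omega
    obtain ⟨rfl, rfl⟩ := row_index_unique (Nat.zero_lt_of_lt hi) hi'
      (show ((0 : ℕ) : ℤ) + (k + 1) * m = i' + k' * m by push_cast; linarith)
    have hps : ps lam mu m = ps lam mu i + (lam i - mu i) := by
      rw [show m = i + 1 by omega]; exact Finset.sum_range_succ _ i
    have hps0 : ps lam mu 0 = 0 := Finset.sum_range_zero _
    linarith

end RowReading

theorem std_descent_general (n m ℓ : ℕ) (hn : 2 ≤ n) (lam mu : ℕ → ℤ)
    (hJ : memJ n m ℓ lam mu)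
    (T0 : ℤ × ℤ → ℤ) (hT0 : IsRowReading n m ℓ lam mu T0)
    (w : ℤ → ℤ) (hwb : Function.Bijective w)
    (hwp : ∀ j : ℤ, w (j + (n : ℤ)) = w j + (n : ℤ))
    (i : ℤ)
    (hstd : IsStdTab n m ℓ (hatD m ℓ lam mu) (fun u => w (T0 u)))
    (hlen : len n (fun j => sFun n i (w j)) < len n w) :
    IsStdTab n m ℓ (hatD m ℓ lam mu) (fun u => sFun n i (w (T0 u))) := by
  obtain ⟨⟨hbij, hper⟩, hrow, hcol⟩ := hstd
  have hs : Set.BijOn (sFun n i) Set.univ Set.univ :=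
    (sFun_involutive (by omega) i).bijective.bijOn_univ
  have hmono : ∀ {a b}, a < b → w a < w b → sFun n i (w a) < sFun n i (w b) :=
    sFun_lt_sFun_of_len_sFun_comp_lt hn hwb.injective hwp hlen
  refine ⟨⟨hs.comp hbij, fun u hu => ?_⟩, fun a b h1 h2 => ?_, fun a b h1 h2 => ?_⟩
  · simp only [hper u hu, sFun_add_natCast]
  · exact hmono (hT0.rowInc a b h1 h2) (hrow a b h1 h2)
  · exact hmono (hT0.colInc hJ.2.2.2.2 a b h1 h2) (hcol a b h1 h2)

/-- if `w T₀` is a standard tableau and `l(w) > l(s_i w)` for some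
`i ∈ [0,n-1]`, then `s_i w T₀` is also a standard tableau. -/
theorem std_descent (n m ℓ : ℕ) (hn : 2 ≤ n) (lam mu : ℕ → ℤ)
    (hJ : memJ n m ℓ lam mu)
    (T0 : ℤ × ℤ → ℤ) (hT0 : IsRowReading n m ℓ lam mu T0)
    (w : ℤ → ℤ) (hwb : Function.Bijective w)
    (hwp : ∀ j : ℤ, w (j + (n : ℤ)) = w j + (n : ℤ))
    (i : ℤ) (hi0 : 0 ≤ i) (hin : i < (n : ℤ))
    (hstd : IsStdTab n m ℓ (hatD m ℓ lam mu) (fun u => w (T0 u)))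
    (hlen : len n (fun j => sFun n i (w j)) < len n w) :
    IsStdTab n m ℓ (hatD m ℓ lam mu) (fun u => sFun n i (w (T0 u))) :=
  std_descent_general n m ℓ hn lam mu hJ T0 hT0 w hwb hwp i hstd hlen
end
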